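/- arXiv:1503.00609 — 5 statements merged into one kernel-verified Lean document; each statement's English description precedes it below -/
import Mathlib

section
/- For all real numbers δ and γ with 0 < δ < 1 and 0 < γ < 1, the binary KL divergence satisfies D((δ+γ)/(1+γ) || γ/(1+γ)) > δ²(γ−δ)/(2γ²(1+γ)), where D(p||q) = p·ln(p/q) + (1−p)·ln((1−p)/(1−q)). -/
lemma aux_log_lb (x : ℝ) (hx : 0 < x) : x - x ^ 2 / 2 < Real.log (1 + x) := by
  have key : StrictMonoOn (fun y : ℝ => Real.log (1 + y) - y + y ^ 2 / 2) (Set.Ici 0) := by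
    have hderiv : ∀ y : ℝ, 0 ≤ y →
        HasDerivAt (fun y : ℝ => Real.log (1 + y) - y + y ^ 2 / 2)
          ((1 + y)⁻¹ - 1 + y) y := by
      intro y hy
      have h1 : HasDerivAt (fun y : ℝ => 1 + y) 1 y := by
        simpa using (hasDerivAt_id y).const_add 1
      have h2 : HasDerivAt (fun y : ℝ => Real.log (1 + y)) ((1 + y)⁻¹ * 1) y :=
        (Real.hasDerivAt_log (by linarith)).comp y h1
      have h3 : HasDerivAt (fun y : ℝ => y ^ 2 / 2) (y) y := by
        simpa using ((hasDerivAt_pow 2 y).div_const 2)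
      exact ((h2.sub (hasDerivAt_id y)).add h3).congr_deriv (by ring)
    apply strictMonoOn_of_deriv_pos (convex_Ici 0)
    · exact fun y hy => ((hderiv y hy).continuousAt).continuousWithinAt
    · intro y hy
      rw [interior_Ici] at hy
      have hy' : 0 < y := hy
      rw [(hderiv y hy'.le).deriv]
      have h1y : (0:ℝ) < 1 + y := by linarith
      have : (1 + y)⁻¹ - 1 + y = y ^ 2 / (1 + y) := by
        field_simp; ring
      rw [this]
      exact div_pos (pow_pos hy' 2) h1y
  have h := key Set.self_mem_Ici (Set.mem_Ici.mpr hx.le) hx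
  simp only [add_zero, Real.log_one] at h
  nlinarith [h]

/-- Binary Kullback–Leibler divergence lower bound:
`D((δ+γ)/(1+γ) ‖ γ/(1+γ)) > δ²(γ−δ)/(2γ²(1+γ))`. -/
theorem stmt_0 (δ γ : ℝ) (hδ0 : 0 < δ) (hδ1 : δ < 1) (hγ0 : 0 < γ) (hγ1 : γ < 1) :
    ((δ + γ) / (1 + γ)) * Real.log (((δ + γ) / (1 + γ)) / (γ / (1 + γ)))
      + (1 - (δ + γ) / (1 + γ)) * Real.log ((1 - (δ + γ) / (1 + γ)) / (1 - γ / (1 + γ)))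
    > δ ^ 2 * (γ - δ) / (2 * γ ^ 2 * (1 + γ)) := by
  have h1γ : (0:ℝ) < 1 + γ := by linarith
  have hr1 : ((δ + γ) / (1 + γ)) / (γ / (1 + γ)) = 1 + δ / γ := by
    field_simp; ring
  have hr2 : (1 - (δ + γ) / (1 + γ)) / (1 - γ / (1 + γ)) = 1 - δ := by
    field_simp
    ring
  have hr3 : 1 - (δ + γ) / (1 + γ) = (1 - δ) / (1 + γ) := by
    field_simp
    ring
  rw [hr1, hr2, hr3]
  -- bound for first log
  have hx : 0 < δ / γ := by positivity
  have hL1 : δ / γ - (δ / γ) ^ 2 / 2 < Real.log (1 + δ / γ) := aux_log_lb _ hx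
  -- bound for second log
  have h1δ : (0:ℝ) < 1 - δ := by linarith
  have hL2 : -(δ / (1 - δ)) ≤ Real.log (1 - δ) := by
    have h := Real.log_le_sub_one_of_pos (show (0:ℝ) < (1 - δ)⁻¹ by positivity)
    rw [Real.log_inv] at h
    have : (1 - δ)⁻¹ - 1 = δ / (1 - δ) := by field_simp; ring
    linarith [this ▸ h]
  -- combine
  have hA : (δ + γ) / (1 + γ) * (δ / γ - (δ / γ) ^ 2 / 2) <
      (δ + γ) / (1 + γ) * Real.log (1 + δ / γ) := by
    apply mul_lt_mul_of_pos_left hL1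
    positivity
  have hB : (1 - δ) / (1 + γ) * (-(δ / (1 - δ))) ≤
      (1 - δ) / (1 + γ) * Real.log (1 - δ) := by
    apply mul_le_mul_of_nonneg_left hL2
    positivity
  have hEq : (δ + γ) / (1 + γ) * (δ / γ - (δ / γ) ^ 2 / 2)
      + (1 - δ) / (1 + γ) * (-(δ / (1 - δ)))
      = δ ^ 2 * (γ - δ) / (2 * γ ^ 2 * (1 + γ)) := by
    field_simp
    ring
  linarith
end

section
/- For the two-community symmetric case, with community profiles θ₁ = (a/2, b/2) and θ₂ = (b/2, a/2) where a, b > 0, the CH-divergence satisfies D_+(θ₁, θ₂) = (1/2)·(√a − √b)², and the maximum over t ∈ [0,1] is attained at t = 1/2. -/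
lemma amgm_rpow (x y : ℝ) (hx : 0 < x) (hy : 0 < y) (t : ℝ) :
    2 * Real.sqrt (x * y) ≤ x ^ t * y ^ (1 - t) + y ^ t * x ^ (1 - t) := by
  set u := x ^ t * y ^ (1 - t) with hu
  set v := y ^ t * x ^ (1 - t) with hv
  have hu0 : 0 < u := mul_pos (Real.rpow_pos_of_pos hx t) (Real.rpow_pos_of_pos hy _)
  have hv0 : 0 < v := mul_pos (Real.rpow_pos_of_pos hy t) (Real.rpow_pos_of_pos hx _)
  have huv : u * v = x * y := by
    have hxx : x^t * x^(1-t) = x := by rw [← Real.rpow_add hx]; simp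
    have hyy : y^(1-t) * y^t = y := by rw [← Real.rpow_add hy]; simp
    calc u * v = (x^t * x^(1-t)) * (y^(1-t) * y^t) := by rw [hu, hv]; ring
    _ = x * y := by rw [hxx, hyy]
  have h1 : Real.sqrt (x * y) = Real.sqrt u * Real.sqrt v := by
    rw [← huv, Real.sqrt_mul hu0.le]
  have h2 := sq_nonneg (Real.sqrt u - Real.sqrt v)
  have hsu := Real.sq_sqrt hu0.le
  have hsv := Real.sq_sqrt hv0.le
  nlinarith [h2, hsu, hsv]

lemma half_eval (x y : ℝ) (hx : 0 < x) (hy : 0 < y) :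
    x ^ (1/2 : ℝ) * y ^ (1 - 1/2 : ℝ) = Real.sqrt (x * y) := by
  norm_num
  rw [Real.sqrt_mul hx.le, Real.sqrt_eq_rpow, Real.sqrt_eq_rpow]

/-- Two symmetric communities: with `θ₁ = (a/2, b/2)` and `θ₂ = (b/2, a/2)`,
`D₊(θ₁,θ₂) = (1/2)(√a − √b)²`, and the maximum over `t ∈ [0,1]` is attained at `t = 1/2`. -/
theorem stmt_7 (a b : ℝ) (ha : 0 < a) (hb : 0 < b) :
    IsGreatest
      ((fun t : ℝ => ∑ i : Fin 2,
          (t * (![a / 2, b / 2] i) + (1 - t) * (![b / 2, a / 2] i)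
            - (![a / 2, b / 2] i) ^ t * (![b / 2, a / 2] i) ^ (1 - t))) '' Set.Icc (0 : ℝ) 1)
      ((1 / 2) * (Real.sqrt a - Real.sqrt b) ^ 2) ∧
    (∑ i : Fin 2,
        ((1 / 2 : ℝ) * (![a / 2, b / 2] i) + (1 - 1 / 2) * (![b / 2, a / 2] i)
          - (![a / 2, b / 2] i) ^ (1 / 2 : ℝ) * (![b / 2, a / 2] i) ^ (1 - 1 / 2 : ℝ)))
      = (1 / 2) * (Real.sqrt a - Real.sqrt b) ^ 2 := by
  have hx : (0:ℝ) < a / 2 := by linarith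
  have hy : (0:ℝ) < b / 2 := by linarith
  have hs : Real.sqrt (a/2 * (b/2)) = Real.sqrt a * Real.sqrt b / 2 := by
    rw [show a/2 * (b/2) = a * b / 2^2 by ring, Real.sqrt_div (by positivity),
      Real.sqrt_sq (by norm_num : (0:ℝ) ≤ 2), Real.sqrt_mul ha.le]
  have hsa := Real.sq_sqrt ha.le
  have hsb := Real.sq_sqrt hb.le
  have heval : (∑ i : Fin 2,
        ((1 / 2 : ℝ) * (![a / 2, b / 2] i) + (1 - 1 / 2) * (![b / 2, a / 2] i)
          - (![a / 2, b / 2] i) ^ (1 / 2 : ℝ) * (![b / 2, a / 2] i) ^ (1 - 1 / 2 : ℝ)))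
      = (1 / 2) * (Real.sqrt a - Real.sqrt b) ^ 2 := by
    simp only [Fin.sum_univ_two, Matrix.cons_val_zero, Matrix.cons_val_one, Matrix.head_cons]
    rw [half_eval _ _ hx hy, half_eval _ _ hy hx, mul_comm (b/2) (a/2), hs]
    nlinarith [hsa, hsb]
  refine ⟨⟨⟨1/2, by norm_num, heval⟩, ?_⟩, heval⟩
  rintro z ⟨t, ht, rfl⟩
  simp only [Fin.sum_univ_two, Matrix.cons_val_zero, Matrix.cons_val_one, Matrix.head_cons]
  have h := amgm_rpow (a/2) (b/2) hx hy t
  rw [hs] at h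
  nlinarith [hsa, hsb, mul_comm ((b/2)^t) ((a/2)^(1-t))]
end

section
/- With the setting of the MAP hypothesis test over k hypotheses, the error probability satisfies P_e ≥ (1/(k−1)) · Σ_{i<j} Σ_{d∈X} min(P(D=d|H=i)·p_i, P(D=d|H=j)·p_j). -/
open scoped BigOperators

lemma aux_pt (k : ℕ) (a b : Fin k → ℝ) (hb : ∀ i, 0 ≤ b i)
    (hab : ∀ i j, i ≠ j → min (a i) (a j) ≤ b i + b j) :
    ∑ i, ∑ j, (if i < j then min (a i) (a j) else 0)
      ≤ ((k : ℝ) - 1) * ∑ i, b i := by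
  have h1 : ∑ i, ∑ j, (if i < j then min (a i) (a j) else 0)
      ≤ ∑ i, ∑ j, ((if i < j then b i else 0) + (if i < j then b j else 0)) := by
    refine Finset.sum_le_sum fun i _ => Finset.sum_le_sum fun j _ => ?_
    by_cases h : i < j
    · simp only [if_pos h]; exact hab i j h.ne
    · simp [h]
  have h2 : ∑ i, ∑ j, ((if i < j then b i else 0) + (if i < j then b j else 0))
      = ∑ i, ∑ j, (if i ≠ j then b i else 0) := by
    have hswap : ∑ i, ∑ j, (if i < j then b j else 0)
        = ∑ i, ∑ j, (if j < i then b i else 0) := Finset.sum_comm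
    calc ∑ i, ∑ j, ((if i < j then b i else 0) + (if i < j then b j else 0))
        = ∑ i, ∑ j, (if i < j then b i else 0) + ∑ i, ∑ j, (if i < j then b j else 0) := by
          simp [Finset.sum_add_distrib]
      _ = ∑ i, ∑ j, ((if i < j then b i else 0) + (if j < i then b i else 0)) := by
          rw [hswap]; simp [Finset.sum_add_distrib]
      _ = ∑ i, ∑ j, (if i ≠ j then b i else 0) := by
          refine Finset.sum_congr rfl fun i _ => Finset.sum_congr rfl fun j _ => ?_
          rcases lt_trichotomy i j with h | h | h
          · simp [h, h.ne, not_lt_of_gt h]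
          · simp [h]
          · simp [h, h.ne', not_lt_of_gt h]
  have h3 : ∑ i, ∑ j, (if i ≠ j then b i else 0) = ((k : ℝ) - 1) * ∑ i, b i := by
    have : ∀ i : Fin k, ∑ j, (if i ≠ j then b i else 0) = ((k : ℝ) - 1) * b i := by
      intro i
      have he : ∑ j : Fin k, (if i = j then b i else 0) = b i := by
        simp
      have : ∑ j : Fin k, (if i ≠ j then b i else 0)
          = ∑ j : Fin k, (b i - (if i = j then b i else 0)) := by
        refine Finset.sum_congr rfl fun j _ => ?_
        by_cases h : i = j <;> simp [h]
      rw [this, Finset.sum_sub_distrib, he]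
      simp [Finset.sum_const]
      ring
    rw [Finset.sum_congr rfl fun i _ => this i, ← Finset.mul_sum]
  linarith [h1, h2 ▸ h1, h3]

/-- Lower bound on the MAP error probability for a `k`-ary Bayesian hypothesis test:
`P_e ≥ (1/(k−1)) Σ_{i<j} Σ_d min(P(D=d|H=i)pᵢ, P(D=d|H=j)pⱼ)`. -/
theorem stmt_13 (k : ℕ) (hk : 2 ≤ k) (X : Type) [Countable X]
    (p : Fin k → ℝ) (hp : ∀ i, 0 ≤ p i) (hp1 : ∑ i, p i = 1)
    (W : Fin k → X → ℝ) (hW : ∀ j x, 0 ≤ W j x) (hWsum : ∀ j, Summable (W j))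
    (hW1 : ∀ j, ∑' x, W j x = 1)
    (map : X → Fin k) (hmap : ∀ d j, W j d * p j ≤ W (map d) d * p (map d)) :
    (1 / (k - 1 : ℝ)) * ∑ i, ∑ j, (if i < j then
          ∑' d, min (W i d * p i) (W j d * p j) else 0)
      ≤ ∑ i, p i * ∑' d, (if map d ≠ i then W i d else 0) := by
  have hk1 : (0 : ℝ) < (k : ℝ) - 1 := by
    have : (2 : ℝ) ≤ (k : ℝ) := by exact_mod_cast hk
    linarith
  have hS : ∀ i : Fin k, Summable (fun d => W i d * p i) :=
    fun i => (hWsum i).mul_right _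
  have hSmin : ∀ i j : Fin k,
      Summable (fun d => if i < j then min (W i d * p i) (W j d * p j) else 0) := by
    intro i j
    by_cases h : i < j
    · simp only [if_pos h]
      exact Summable.of_nonneg_of_le
        (fun d => le_min (mul_nonneg (hW i d) (hp i)) (mul_nonneg (hW j d) (hp j)))
        (fun d => min_le_left _ _) (hS i)
    · simp only [if_neg h]; exact summable_zero
  have hSb : ∀ i : Fin k, Summable (fun d => if map d ≠ i then W i d * p i else 0) := by
    intro i
    refine Summable.of_nonneg_of_le (fun d => ?_) (fun d => ?_) (hS i)
    · split
      · exact mul_nonneg (hW i d) (hp i)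
      · exact le_refl 0
    · split
      · exact le_refl _
      · exact mul_nonneg (hW i d) (hp i)
  -- rewrite LHS as a single tsum
  have hLHS : ∑ i, ∑ j, (if i < j then ∑' d, min (W i d * p i) (W j d * p j) else 0)
      = ∑' d, ∑ i, ∑ j, (if i < j then min (W i d * p i) (W j d * p j) else 0) := by
    rw [Summable.tsum_finsetSum (fun i _ => summable_sum (fun j _ => hSmin i j))]
    refine Finset.sum_congr rfl fun i _ => ?_
    rw [Summable.tsum_finsetSum (fun j _ => hSmin i j)]
    refine Finset.sum_congr rfl fun j _ => ?_
    by_cases h : i < j <;> simp [h]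
  -- rewrite RHS as a single tsum
  have hRHS : ∑ i, p i * ∑' d, (if map d ≠ i then W i d else 0)
      = ∑' d, ∑ i, (if map d ≠ i then W i d * p i else 0) := by
    rw [Summable.tsum_finsetSum (fun i _ => hSb i)]
    refine Finset.sum_congr rfl fun i _ => ?_
    rw [← tsum_mul_left]
    refine tsum_congr fun d => ?_
    by_cases h : map d ≠ i <;> simp [h, mul_comm]
  rw [hLHS, hRHS, one_div, inv_mul_le_iff₀ hk1, ← tsum_mul_left]
  refine Summable.tsum_le_tsum (fun d => ?_)
    (summable_sum (fun i _ => summable_sum (fun j _ => hSmin i j)))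
    ((summable_sum (fun i _ => hSb i)).mul_left _)
  refine aux_pt k (fun i => W i d * p i) (fun i => if map d ≠ i then W i d * p i else 0)
    (fun i => ?_) (fun i j hij => ?_)
  · show (0:ℝ) ≤ if map d ≠ i then W i d * p i else 0
    split
    · exact mul_nonneg (hW i d) (hp i)
    · exact le_refl 0
  · show min (W i d * p i) (W j d * p j)
      ≤ (if map d ≠ i then W i d * p i else 0) + (if map d ≠ j then W j d * p j else 0)
    by_cases h : map d = i
    · have hj : map d ≠ j := fun e => hij ((h.symm.trans e))
      rw [if_neg (not_not_intro h), if_pos hj, zero_add]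
      exact min_le_right _ _
    · have h0 : (0:ℝ) ≤ if map d ≠ j then W j d * p j else 0 := by
        split
        · exact mul_nonneg (hW j d) (hp j)
        · exact le_refl 0
      rw [if_pos h]
      calc min (W i d * p i) (W j d * p j) ≤ W i d * p i := min_le_left _ _
        _ ≤ _ := by linarith
end

section
/- Combining the previous two facts: for any λ, μ ∈ ℝ_{>0}^k, Σ_{d ∈ ℤ_{≥0}^k} min(P_{n·λ}(d), P_{n·μ}(d)) ≤ exp(−n · D_+(λ,μ)) for all n > 0, where D_+(λ,μ) = max_{t∈[0,1]} Σ_i (tλ_i + (1−t)μ_i − λ_i^t μ_i^{1−t}) and P_c is the product Poisson distribution with mean vector c. -/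
/-- The product Poisson pmf on `ℤ_{≥0}^k` with mean vector `lam`. -/
noncomputable def prodPoissonPMF {k : ℕ} (lam : Fin k → ℝ) (d : Fin k → ℕ) : ℝ :=
  ∏ i, (lam i) ^ (d i) / (Nat.factorial (d i)) * Real.exp (-(lam i))

/-- min of two positives is at most their weighted geometric mean. -/
lemma min_le_geom (A B : ℝ) (hA : 0 < A) (hB : 0 < B) (t : ℝ) (ht0 : 0 ≤ t) (ht1 : t ≤ 1) :
    min A B ≤ A ^ t * B ^ (1 - t) := by
  have ht1' : 0 ≤ 1 - t := by linarith
  rcases le_total A B with h | h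
  · have : A = A ^ t * A ^ (1 - t) := by
      rw [← Real.rpow_add hA]; norm_num
    calc min A B = A := min_eq_left h
      _ = A ^ t * A ^ (1 - t) := this
      _ ≤ A ^ t * B ^ (1 - t) := by gcongr
  · have : B = B ^ t * B ^ (1 - t) := by
      rw [← Real.rpow_add hB]; norm_num
    calc min A B = B := min_eq_right h
      _ = B ^ t * B ^ (1 - t) := this
      _ ≤ A ^ t * B ^ (1 - t) := by gcongr

/-- Geometric mean of Poisson weights is a scaled Poisson weight. -/
lemma poisson_geom_eq (c c' : ℝ) (hc : 0 < c) (hc' : 0 < c') (t : ℝ) (m : ℕ) :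
    (c ^ m / (Nat.factorial m) * Real.exp (-c)) ^ t
      * (c' ^ m / (Nat.factorial m) * Real.exp (-c')) ^ (1 - t)
      = (c ^ t * c' ^ (1 - t)) ^ m / (Nat.factorial m)
        * Real.exp (-(t * c + (1 - t) * c')) := by
  have hm : (0 : ℝ) < (Nat.factorial m : ℝ) := by positivity
  have hA : (0 : ℝ) < c ^ m / (Nat.factorial m) * Real.exp (-c) := by positivity
  have hB : (0 : ℝ) < c' ^ m / (Nat.factorial m) * Real.exp (-c') := by positivity
  have hR : (0 : ℝ)
      < (c ^ t * c' ^ (1 - t)) ^ m / (Nat.factorial m) * Real.exp (-(t * c + (1 - t) * c')) := by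
    have h1 : (0 : ℝ) < c ^ t := Real.rpow_pos_of_pos hc t
    have h2 : (0 : ℝ) < c' ^ (1 - t) := Real.rpow_pos_of_pos hc' (1 - t)
    positivity
  rw [← Real.exp_log hR, Real.rpow_def_of_pos hA, Real.rpow_def_of_pos hB, ← Real.exp_add]
  congr 1
  have h1 : (0 : ℝ) < c ^ t := Real.rpow_pos_of_pos hc t
  have h2 : (0 : ℝ) < c' ^ (1 - t) := Real.rpow_pos_of_pos hc' (1 - t)
  rw [Real.log_mul (by positivity) (Real.exp_pos _).ne',
      Real.log_mul (by positivity) (Real.exp_pos _).ne',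
      Real.log_mul (by positivity) (Real.exp_pos _).ne',
      Real.log_div (by positivity) hm.ne', Real.log_div (by positivity) hm.ne',
      Real.log_div (by positivity) hm.ne', Real.log_pow, Real.log_pow, Real.log_pow,
      Real.log_exp, Real.log_exp, Real.log_exp,
      Real.log_mul h1.ne' h2.ne', Real.log_rpow hc, Real.log_rpow hc']
  ring

/-- Each coordinate's scaled Poisson series sums to an exponential. -/
lemma coord_hasSum (b E : ℝ) :
    HasSum (fun m : ℕ => b ^ m / (Nat.factorial m) * E) (Real.exp b * E) := by
  have h : HasSum (fun m : ℕ => b ^ m / (Nat.factorial m)) (Real.exp b) := by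
    have hs := (Real.summable_pow_div_factorial b).hasSum
    have : (∑' m : ℕ, b ^ m / (Nat.factorial m)) = Real.exp b := by
      rw [Real.exp_eq_exp_ℝ, NormedSpace.exp_eq_tsum_div]
    rwa [this] at hs
  exact h.mul_right E

set_option maxHeartbeats 1000000 in
/-- Factorization of a sum over `Fin k → ℕ` of a nonnegative product. -/
lemma hasSum_pi_prod : ∀ (k : ℕ) (f : Fin k → ℕ → ℝ) (s : Fin k → ℝ),
    (∀ i m, 0 ≤ f i m) → (∀ i, HasSum (f i) (s i)) →
    HasSum (fun d : Fin k → ℕ => ∏ i, f i (d i)) (∏ i, s i) := by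
  intro k
  induction k with
  | zero =>
    intro f s _ _
    simpa using hasSum_fintype (fun d : Fin 0 → ℕ => ∏ i, f i (d i))
  | succ k ih =>
    intro f s hpos h
    have hP : HasSum (fun d : Fin k → ℕ => ∏ i : Fin k, f i.succ (d i)) (∏ i : Fin k, s i.succ) :=
      ih (fun i : Fin k => f i.succ) (fun i : Fin k => s i.succ) (fun i m => hpos i.succ m)
        (fun i => h i.succ)
    have hsummable : Summable
        (fun x : ℕ × (Fin k → ℕ) => f 0 x.1 * ∏ i : Fin k, f i.succ (x.2 i)) := by
      have h1 : Summable fun m : ℕ => ‖f 0 m‖ :=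
        (summable_congr fun m => (Real.norm_of_nonneg (hpos 0 m))).mpr (h 0).summable
      have h2 : Summable fun d : Fin k → ℕ => ‖∏ i : Fin k, f i.succ (d i)‖ :=
        (summable_congr fun d => Real.norm_of_nonneg
          (Finset.prod_nonneg fun i _ => hpos i.succ (d i))).mpr hP.summable
      exact summable_mul_of_summable_norm (f := f 0)
        (g := fun d : Fin k → ℕ => ∏ i : Fin k, f i.succ (d i)) h1 h2
    have hG : HasSum (fun x : ℕ × (Fin k → ℕ) => f 0 x.1 * ∏ i : Fin k, f i.succ (x.2 i))
        (s 0 * ∏ i : Fin k, s i.succ) :=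
      HasSum.mul (f := f 0) (g := fun d : Fin k → ℕ => ∏ i : Fin k, f i.succ (d i))
        (h 0) hP hsummable
    have hcomp := ((Fin.consEquiv (fun _ : Fin (k + 1) => ℕ)).symm.hasSum_iff
      (f := fun x : ℕ × (Fin k → ℕ) => f 0 x.1 * ∏ i : Fin k, f i.succ (x.2 i))
      (a := s 0 * ∏ i : Fin k, s i.succ)).mpr hG
    have key : (fun d : Fin (k + 1) → ℕ => ∏ i, f i (d i))
        = (fun x : ℕ × (Fin k → ℕ) => f 0 x.1 * ∏ i : Fin k, f i.succ (x.2 i))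
          ∘ (Fin.consEquiv (fun _ : Fin (k + 1) => ℕ)).symm := by
      funext d
      simp [Fin.prod_univ_succ, Fin.consEquiv, Fin.tail]
    rw [Fin.prod_univ_succ, key]
    exact hcomp

/-- For positive mean vectors `λ, μ`, the overlap of the product Poisson distributions with
means `n·λ` and `n·μ` is at most `exp(−n·D₊(λ,μ))`, where `D₊` is the CH-divergence. -/
theorem stmt_18 (k : ℕ) (lam mu : Fin k → ℝ)
    (hlam : ∀ i, 0 < lam i) (hmu : ∀ i, 0 < mu i) (n : ℝ) (hn : 0 < n) (D : ℝ)
    (hD : IsGreatest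
      ((fun t : ℝ => ∑ i, (t * lam i + (1 - t) * mu i - (lam i) ^ t * (mu i) ^ (1 - t))) ''
        Set.Icc (0 : ℝ) 1) D) :
    ∑' d : Fin k → ℕ,
        min (prodPoissonPMF (fun i => n * lam i) d) (prodPoissonPMF (fun i => n * mu i) d)
      ≤ Real.exp (-(n * D)) := by
  obtain ⟨t, ht, hft⟩ := hD.1
  obtain ⟨ht0, ht1⟩ := ht
  set c : Fin k → ℝ := fun i => n * lam i with hc_def
  set c' : Fin k → ℝ := fun i => n * mu i with hc'_def
  have hc : ∀ i, 0 < c i := fun i => mul_pos hn (hlam i)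
  have hc' : ∀ i, 0 < c' i := fun i => mul_pos hn (hmu i)
  -- the dominating function
  set g : Fin k → ℕ → ℝ := fun i m =>
    (c i ^ t * c' i ^ (1 - t)) ^ m / (Nat.factorial m)
      * Real.exp (-(t * c i + (1 - t) * c' i)) with hg_def
  have hg_pos : ∀ i m, 0 < g i m := by
    intro i m
    have h1 : (0 : ℝ) < c i ^ t := Real.rpow_pos_of_pos (hc i) t
    have h2 : (0 : ℝ) < c' i ^ (1 - t) := Real.rpow_pos_of_pos (hc' i) (1 - t)
    have hm : (0 : ℝ) < (Nat.factorial m : ℝ) := by positivity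
    simp only [hg_def]
    positivity
  set G : (Fin k → ℕ) → ℝ := fun d => ∏ i, g i (d i) with hG_def
  -- pointwise bound
  have hApos : ∀ d : Fin k → ℕ, 0 < prodPoissonPMF c d := by
    intro d
    apply Finset.prod_pos
    intro i _
    have := hc i
    positivity
  have hBpos : ∀ d : Fin k → ℕ, 0 < prodPoissonPMF c' d := by
    intro d
    apply Finset.prod_pos
    intro i _
    have := hc' i
    positivity
  have hpoint : ∀ d : Fin k → ℕ,
      min (prodPoissonPMF c d) (prodPoissonPMF c' d) ≤ G d := by
    intro d
    refine le_trans (min_le_geom _ _ (hApos d) (hBpos d) t ht0 ht1) ?_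
    have hprodA : (prodPoissonPMF c d) ^ t
        = ∏ i, (c i ^ (d i) / (Nat.factorial (d i)) * Real.exp (-(c i))) ^ t := by
      rw [prodPoissonPMF, ← Real.finset_prod_rpow]
      intro i _
      have := hc i
      positivity
    have hprodB : (prodPoissonPMF c' d) ^ (1 - t)
        = ∏ i, (c' i ^ (d i) / (Nat.factorial (d i)) * Real.exp (-(c' i))) ^ (1 - t) := by
      rw [prodPoissonPMF, ← Real.finset_prod_rpow]
      intro i _
      have := hc' i
      positivity
    rw [hprodA, hprodB, ← Finset.prod_mul_distrib]
    apply le_of_eq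
    apply Finset.prod_congr rfl
    intro i _
    exact poisson_geom_eq (c i) (c' i) (hc i) (hc' i) t (d i)
  -- sum of the dominating function
  have hGsum : HasSum G (∏ i, Real.exp (c i ^ t * c' i ^ (1 - t))
      * Real.exp (-(t * c i + (1 - t) * c' i))) := by
    apply hasSum_pi_prod
    · intro i m; exact (hg_pos i m).le
    · intro i; exact coord_hasSum _ _
  -- evaluate the product of exponentials
  have hval : (∏ i, Real.exp (c i ^ t * c' i ^ (1 - t))
      * Real.exp (-(t * c i + (1 - t) * c' i))) = Real.exp (-(n * D)) := by
    have : ∀ i, Real.exp (c i ^ t * c' i ^ (1 - t)) * Real.exp (-(t * c i + (1 - t) * c' i))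
        = Real.exp (-(n * (t * lam i + (1 - t) * mu i - lam i ^ t * mu i ^ (1 - t)))) := by
      intro i
      rw [← Real.exp_add]
      congr 1
      have hcc : c i ^ t * c' i ^ (1 - t) = n * (lam i ^ t * mu i ^ (1 - t)) := by
        simp only [hc_def, hc'_def]
        rw [Real.mul_rpow hn.le (hlam i).le, Real.mul_rpow hn.le (hmu i).le]
        have : n ^ t * n ^ (1 - t) = n := by
          rw [← Real.rpow_add hn]; norm_num
        calc n ^ t * lam i ^ t * (n ^ (1 - t) * mu i ^ (1 - t))
            = (n ^ t * n ^ (1 - t)) * (lam i ^ t * mu i ^ (1 - t)) := by ring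
          _ = n * (lam i ^ t * mu i ^ (1 - t)) := by rw [this]
      rw [hcc]
      simp only [hc_def, hc'_def]
      ring
    rw [Finset.prod_congr rfl (fun i _ => this i), ← Real.exp_sum]
    congr 1
    rw [← hft]
    simp only
    rw [Finset.mul_sum, ← Finset.sum_neg_distrib]
  -- conclude
  have hGsum' : HasSum G (Real.exp (-(n * D))) := hval ▸ hGsum
  have hmin_summable : Summable (fun d : Fin k → ℕ =>
      min (prodPoissonPMF c d) (prodPoissonPMF c' d)) := by
    apply Summable.of_nonneg_of_le
    · intro d; exact le_min (hApos d).le (hBpos d).le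
    · exact hpoint
    · exact hGsum'.summable
  calc ∑' d : Fin k → ℕ, min (prodPoissonPMF c d) (prodPoissonPMF c' d)
      ≤ ∑' d, G d := Summable.tsum_le_tsum hpoint hmin_summable hGsum'.summable
    _ = Real.exp (-(n * D)) := hGsum'.tsum_eq
end

section
/- Le Cam's inequality: for any positive integer m and q ∈ [0,1], the total variation distance between the binomial distribution Bin(m, q) and the Poisson distribution with mean mq satisfies ‖Bin(m,q) − Poisson(mq)‖_TV ≤ 2·m·q². -/
/-- The binomial pmf on `ℕ` with `m` trials and success probability `q`. -/
noncomputable def binomPMF (m : ℕ) (q : ℝ) (i : ℕ) : ℝ :=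
  (m.choose i : ℝ) * q ^ i * (1 - q) ^ (m - i)

/-- The Poisson pmf on `ℕ` with mean `c`. -/
noncomputable def poissonPMF' (c : ℝ) (i : ℕ) : ℝ :=
  c ^ i / (Nat.factorial i) * Real.exp (-c)

noncomputable def conv (f g : ℕ → ℝ) (n : ℕ) : ℝ :=
  ∑ k ∈ Finset.range (n + 1), f k * g (n - k)

lemma realexp_tsum (x : ℝ) : (∑' n : ℕ, x ^ n / n.factorial) = Real.exp x := by
  rw [Real.exp_eq_exp_ℝ, NormedSpace.exp_eq_tsum_div]

lemma summable_poisson (c : ℝ) : Summable (poissonPMF' c) := by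
  unfold poissonPMF'
  exact (Real.summable_pow_div_factorial c).mul_right _

lemma poisson_nonneg {c : ℝ} (hc : 0 ≤ c) (i : ℕ) : 0 ≤ poissonPMF' c i := by
  unfold poissonPMF'
  positivity

lemma tsum_poisson {c : ℝ} : (∑' i, poissonPMF' c i) = 1 := by
  unfold poissonPMF'
  rw [tsum_mul_right, realexp_tsum, ← Real.exp_add, add_neg_cancel, Real.exp_zero]

lemma summable_binom (m : ℕ) (q : ℝ) : Summable (binomPMF m q) := by
  apply summable_of_ne_finset_zero (s := Finset.range (m + 1))
  intro i hi
  simp only [Finset.mem_range, not_lt] at hi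
  unfold binomPMF
  rw [Nat.choose_eq_zero_of_lt (by omega)]
  simp

lemma binom_nonneg {m : ℕ} {q : ℝ} (hq0 : 0 ≤ q) (hq1 : q ≤ 1) (i : ℕ) :
    0 ≤ binomPMF m q i := by
  unfold binomPMF
  have : (0:ℝ) ≤ 1 - q := by linarith
  positivity

lemma tsum_binom_one {q : ℝ} : (∑' i, binomPMF 1 q i) = 1 := by
  rw [tsum_eq_sum (s := Finset.range 2)]
  · simp [binomPMF, Finset.sum_range_succ]
  · intro i hi
    simp only [Finset.mem_range, not_lt] at hi
    unfold binomPMF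
    rw [Nat.choose_eq_zero_of_lt (by omega)]
    simp

lemma conv_comm (f g : ℕ → ℝ) (n : ℕ) : conv f g n = conv g f n := by
  unfold conv
  rw [← Finset.sum_range_reflect]
  apply Finset.sum_congr rfl
  intro k hk
  simp only [Finset.mem_range] at hk
  have h1 : n - (n + 1 - 1 - k) = k := by omega
  have h2 : n + 1 - 1 - k = n - k := by omega
  rw [h1, h2, mul_comm]

lemma summable_conv {f g : ℕ → ℝ} (hf : Summable fun n => |f n|)
    (hg : Summable fun n => |g n|) : Summable (conv f g) := by
  have := summable_sum_mul_range_of_summable_norm' (f := f) (g := g)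
    (by simpa using hf) hf.of_abs (by simpa using hg) hg.of_abs
  exact this

lemma tsum_conv {f g : ℕ → ℝ} (hf : Summable fun n => |f n|)
    (hg : Summable fun n => |g n|) :
    (∑' n, conv f g n) = (∑' n, f n) * (∑' n, g n) := by
  exact (tsum_mul_tsum_eq_tsum_sum_range_of_summable_norm
    (by simpa using hf) (by simpa using hg)).symm

/-- key subadditivity: `∑' |f⋆h - g⋆h| ≤ (∑'|f-g|) * (∑' h)` for `h ≥ 0`. -/
lemma tsum_abs_conv_sub_conv_le {f g h : ℕ → ℝ}
    (hfg : Summable fun n => |f n - g n|) (hh : Summable h)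
    (hh0 : ∀ n, 0 ≤ h n) :
    (∑' n, |conv f h n - conv g h n|) ≤ (∑' n, |f n - g n|) * (∑' n, h n) := by
  have habs : Summable fun n => |h n| := by
    simpa [abs_of_nonneg (hh0 _)] using hh
  have hconv : Summable (conv (fun n => |f n - g n|) h) :=
    summable_conv (by simpa using hfg) habs
  have hle : ∀ n, |conv f h n - conv g h n| ≤ conv (fun k => |f k - g k|) h n := by
    intro n
    unfold conv
    rw [← Finset.sum_sub_distrib]
    refine (Finset.abs_sum_le_sum_abs _ _).trans ?_
    apply Finset.sum_le_sum
    intro k hk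
    rw [← sub_mul, abs_mul, abs_of_nonneg (hh0 _)]
  calc (∑' n, |conv f h n - conv g h n|)
      ≤ ∑' n, conv (fun k => |f k - g k|) h n := by
        apply Summable.tsum_le_tsum hle _ hconv
        exact Summable.of_nonneg_of_le (fun n => abs_nonneg _) hle hconv
    _ = (∑' n, |f n - g n|) * (∑' n, h n) := tsum_conv (by simpa using hfg) habs

lemma conv_poisson (a b : ℝ) : conv (poissonPMF' a) (poissonPMF' b) = poissonPMF' (a + b) := by
  funext n
  unfold conv poissonPMF'
  rw [add_pow]
  rw [Finset.sum_div, Finset.sum_mul]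
  apply Finset.sum_congr ?_ ?_
  · ext k; simp [Nat.lt_succ_iff]
  · intro k hk
    simp only [Finset.mem_range, Nat.lt_succ_iff] at hk
    have hfac : (n.factorial : ℝ) = k.factorial * (n - k).factorial * n.choose k := by
      rw_mod_cast [← Nat.choose_mul_factorial_mul_factorial hk]; ring
    have h1 : (k.factorial : ℝ) ≠ 0 := by positivity
    have h2 : ((n - k).factorial : ℝ) ≠ 0 := by positivity
    have h3 : (n.factorial : ℝ) ≠ 0 := by positivity
    have h4 : (n.choose k : ℝ) ≠ 0 := by
      exact_mod_cast Nat.cast_ne_zero.mpr (Nat.choose_pos hk).ne'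
    rw [neg_add, Real.exp_add, hfac]
    field_simp

lemma conv_binom_succ (m : ℕ) (q : ℝ) :
    conv (binomPMF m q) (binomPMF 1 q) = binomPMF (m + 1) q := by
  funext n
  unfold conv
  match n with
  | 0 =>
    simp [binomPMF]
    ring
  | Nat.succ j =>
    rw [Finset.sum_range_succ, Finset.sum_range_succ]
    have hzero : ∑ k ∈ Finset.range j, binomPMF m q k * binomPMF 1 q (j + 1 - k) = 0 := by
      apply Finset.sum_eq_zero
      intro k hk
      simp only [Finset.mem_range] at hk
      have : binomPMF 1 q (j + 1 - k) = 0 := by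
        unfold binomPMF
        rw [Nat.choose_eq_zero_of_lt (by omega)]
        simp
      rw [this, mul_zero]
    rw [hzero, zero_add]
    have hj1 : j + 1 - j = 1 := by omega
    rw [hj1]
    have hb0 : binomPMF 1 q 0 = 1 - q := by simp [binomPMF]
    have hb1 : binomPMF 1 q 1 = q := by simp [binomPMF]
    have hjs : j.succ - (j + 1) = 0 := by omega
    rw [hjs, hb0, hb1]
    show binomPMF m q j * q + binomPMF m q (j + 1) * (1 - q) = binomPMF (m + 1) q (j + 1)
    unfold binomPMF
    rcases lt_or_ge m j with hmj | hmj
    · rw [Nat.choose_eq_zero_of_lt (by omega), Nat.choose_eq_zero_of_lt (by omega),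
        Nat.choose_eq_zero_of_lt (by omega)]
      simp
    · rcases eq_or_lt_of_le hmj with hmj' | hmj'
      · subst hmj'
        rw [Nat.choose_self, Nat.choose_succ_self, Nat.choose_self]
        simp [pow_succ]
      · -- j + 1 ≤ m
        have hjm : j + 1 ≤ m := hmj'
        rw [Nat.succ_sub_succ]
        have he : m - j = (m - (j+1)) + 1 := by omega
        have hch : ((m+1).choose (j+1) : ℝ) = m.choose j + m.choose (j+1) := by
          exact_mod_cast Nat.choose_succ_succ m j
        rw [hch, he, pow_succ, pow_succ]
        ring

lemma summable_abs_sub (m : ℕ) (q c : ℝ) :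
    Summable fun i => |binomPMF m q i - poissonPMF' c i| :=
  ((summable_binom m q).sub (summable_poisson c)).abs

lemma base_bound {q : ℝ} (hq0 : 0 ≤ q) (hq1 : q ≤ 1) :
    (∑' i, |binomPMF 1 q i - poissonPMF' q i|) ≤ 4 * q ^ 2 := by
  have hS := summable_abs_sub 1 q q
  have hsplit := Summable.sum_add_tsum_nat_add 2 hS
  rw [← hsplit]
  have hexp : 1 - q ≤ Real.exp (-q) := by
    have := Real.add_one_le_exp (-q); linarith
  have hexp1 : Real.exp (-q) ≤ 1 := by
    rw [Real.exp_le_one_iff]; linarith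
  -- term 0
  have ht0 : |binomPMF 1 q 0 - poissonPMF' q 0| ≤ q ^ 2 := by
    have hb : binomPMF 1 q 0 = 1 - q := by simp [binomPMF]
    have hp : poissonPMF' q 0 = Real.exp (-q) := by simp [poissonPMF']
    rw [hb, hp, abs_sub_comm, abs_of_nonneg (by linarith)]
    have hinv : Real.exp (-q) ≤ 1 / (1 + q) := by
      rw [Real.exp_neg, inv_eq_one_div]
      have h1 : (0:ℝ) < 1 + q := by linarith
      have h2 : 1 + q ≤ Real.exp q := by
        have := Real.add_one_le_exp q; linarith
      exact div_le_div_of_nonneg_left zero_le_one h1 h2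
    have : 1 / (1 + q) - (1 - q) ≤ q ^ 2 := by
      rw [div_sub' (by positivity : (1:ℝ) + q ≠ 0)]
      rw [div_le_iff₀ (by positivity)]
      nlinarith
    linarith
  -- term 1
  have ht1 : |binomPMF 1 q 1 - poissonPMF' q 1| ≤ q ^ 2 := by
    have hb : binomPMF 1 q 1 = q := by simp [binomPMF]
    have hp : poissonPMF' q 1 = q * Real.exp (-q) := by
      simp [poissonPMF']
    rw [hb, hp]
    have : q - q * Real.exp (-q) = q * (1 - Real.exp (-q)) := by ring
    rw [abs_of_nonneg (by nlinarith), this]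
    nlinarith
  -- tail
  have htail : (∑' i : ℕ, |binomPMF 1 q (i + 2) - poissonPMF' q (i + 2)|) ≤ q ^ 2 := by
    have heq : ∀ i : ℕ, |binomPMF 1 q (i + 2) - poissonPMF' q (i + 2)| = poissonPMF' q (i + 2) := by
      intro i
      have hb : binomPMF 1 q (i + 2) = 0 := by
        unfold binomPMF
        rw [Nat.choose_eq_zero_of_lt (by omega)]
        simp
      rw [hb, zero_sub, abs_neg, abs_of_nonneg (poisson_nonneg hq0 _)]
    have hle : ∀ i : ℕ, poissonPMF' q (i + 2) ≤ q ^ 2 * poissonPMF' q i := by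
      intro i
      unfold poissonPMF'
      rw [← mul_assoc, show q ^ 2 * (q ^ i / i.factorial) = q ^ (i + 2) / i.factorial by
        rw [pow_add]; ring]
      have hfac : (i.factorial : ℝ) ≤ ((i + 2).factorial : ℝ) := by
        exact_mod_cast Nat.factorial_le (by omega)
      have hfp : (0:ℝ) < (i.factorial : ℝ) := by positivity
      exact mul_le_mul_of_nonneg_right
        (div_le_div_of_nonneg_left (pow_nonneg hq0 _) hfp hfac) (Real.exp_pos _).le
    calc (∑' i : ℕ, |binomPMF 1 q (i + 2) - poissonPMF' q (i + 2)|)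
        = ∑' i : ℕ, poissonPMF' q (i + 2) := tsum_congr heq
      _ ≤ ∑' i : ℕ, q ^ 2 * poissonPMF' q i :=
          Summable.tsum_le_tsum hle ((summable_nat_add_iff 2).mpr (summable_poisson q))
            ((summable_poisson q).mul_left _)
      _ = q ^ 2 := by rw [tsum_mul_left, tsum_poisson, mul_one]
  have : ∑ i ∈ Finset.range 2, |binomPMF 1 q i - poissonPMF' q i| ≤ 2 * q ^ 2 := by
    rw [Finset.sum_range_succ, Finset.sum_range_one]
    linarith
  nlinarith [sq_nonneg q]

lemma step_bound {q : ℝ} (hq0 : 0 ≤ q) (hq1 : q ≤ 1) (m : ℕ) :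
    (∑' i, |binomPMF (m + 1) q i - poissonPMF' ((m + 1 : ℕ) * q) i|) ≤
      (∑' i, |binomPMF m q i - poissonPMF' (m * q) i|) +
      ∑' i, |binomPMF 1 q i - poissonPMF' q i| := by
  set f := binomPMF m q with hf
  set g := poissonPMF' (m * q) with hg
  set h := binomPMF 1 q with hh
  set p := poissonPMF' q with hp
  have hmq0 : (0:ℝ) ≤ (m : ℝ) * q := by positivity
  have hA : binomPMF (m + 1) q = conv f h := (conv_binom_succ m q).symm
  have hC : poissonPMF' ((m + 1 : ℕ) * q) = conv g p := by
    have : ((m + 1 : ℕ) : ℝ) * q = (m : ℝ) * q + q := by push_cast; ring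
    rw [this, ← conv_poisson]
  rw [hA, hC]
  -- summabilities
  have habs_f : Summable fun n => |f n| := (summable_binom m q).abs
  have habs_g : Summable fun n => |g n| := (summable_poisson _).abs
  have habs_h : Summable fun n => |h n| := (summable_binom 1 q).abs
  have habs_p : Summable fun n => |p n| := (summable_poisson _).abs
  have hsum_fh : Summable (conv f h) := summable_conv habs_f habs_h
  have hsum_gh : Summable (conv g h) := summable_conv habs_g habs_h
  have hsum_gp : Summable (conv g p) := summable_conv habs_g habs_p
  have h1 : Summable fun n => |conv f h n - conv g h n| := (hsum_fh.sub hsum_gh).abs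
  have h2 : Summable fun n => |conv g h n - conv g p n| := (hsum_gh.sub hsum_gp).abs
  calc (∑' n, |conv f h n - conv g p n|)
      ≤ ∑' n, (|conv f h n - conv g h n| + |conv g h n - conv g p n|) := by
        apply Summable.tsum_le_tsum (fun n => abs_sub_le _ _ _) ((hsum_fh.sub hsum_gp).abs) (h1.add h2)
    _ = (∑' n, |conv f h n - conv g h n|) + ∑' n, |conv g h n - conv g p n| :=
        Summable.tsum_add h1 h2
    _ ≤ (∑' n, |f n - g n|) * (∑' n, h n) + (∑' n, |h n - p n|) * (∑' n, g n) := by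
        have hb1 := tsum_abs_conv_sub_conv_le (f := f) (g := g) (h := h)
          (habs_f.of_abs.sub habs_g.of_abs).abs (summable_binom 1 q)
          (binom_nonneg hq0 hq1)
        have hb2 := tsum_abs_conv_sub_conv_le (f := h) (g := p) (h := g)
          (habs_h.of_abs.sub habs_p.of_abs).abs (summable_poisson _)
          (poisson_nonneg hmq0)
        have hcomm1 : ∀ n, conv g h n = conv h g n := conv_comm g h
        have hcomm2 : ∀ n, conv g p n = conv p g n := conv_comm g p
        calc (∑' n, |conv f h n - conv g h n|) + ∑' n, |conv g h n - conv g p n|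
            = (∑' n, |conv f h n - conv g h n|) + ∑' n, |conv h g n - conv p g n| := by
              congr 1
              exact tsum_congr fun n => by rw [hcomm1 n, hcomm2 n]
          _ ≤ _ := add_le_add hb1 hb2
    _ = (∑' n, |f n - g n|) + ∑' n, |h n - p n| := by
        rw [hh, tsum_binom_one, hg, tsum_poisson, mul_one, mul_one]

lemma S_le {q : ℝ} (hq0 : 0 ≤ q) (hq1 : q ≤ 1) (m : ℕ) :
    (∑' i, |binomPMF m q i - poissonPMF' ((m : ℝ) * q) i|) ≤ m * (4 * q ^ 2) := by
  induction m with
  | zero =>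
    have : ∀ i, |binomPMF 0 q i - poissonPMF' ((0 : ℕ) * q) i| = 0 := by
      intro i
      have : binomPMF 0 q i = poissonPMF' ((0 : ℕ) * q) i := by
        unfold binomPMF poissonPMF'
        match i with
        | 0 => simp
        | Nat.succ j => simp [Nat.choose_eq_zero_of_lt (Nat.succ_pos j)]
      rw [this, sub_self, abs_zero]
    rw [tsum_congr this]
    simp
  | succ m ih =>
    calc (∑' i, |binomPMF (m + 1) q i - poissonPMF' ((m + 1 : ℕ) * q) i|)
        ≤ (∑' i, |binomPMF m q i - poissonPMF' (m * q) i|) +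
            ∑' i, |binomPMF 1 q i - poissonPMF' q i| := step_bound hq0 hq1 m
      _ ≤ m * (4 * q ^ 2) + 4 * q ^ 2 := add_le_add ih (base_bound hq0 hq1)
      _ = (m + 1 : ℕ) * (4 * q ^ 2) := by push_cast; ring

/-- Le Cam's inequality: the total variation distance (half the `ℓ¹` distance) between
`Bin(m, q)` and `Poisson(m·q)` is at most `2·m·q²`. -/
theorem stmt_19 (m : ℕ) (hm : 0 < m) (q : ℝ) (hq0 : 0 ≤ q) (hq1 : q ≤ 1) :
    (1 / 2 : ℝ) * ∑' i : ℕ, |binomPMF m q i - poissonPMF' (m * q) i| ≤ 2 * m * q ^ 2 := by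
  have := S_le hq0 hq1 m
  linarith
end
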